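/- arXiv:2202.00083 — 6 statements merged into one kernel-verified Lean document; each statement's English description precedes it below -/
import Mathlib

section
/- Let V and W be finite-dimensional real inner product spaces, let J be a compatible complex structure on V, and let (e_1, …, e_n, η_1, …, η_d) be an orthonormal basis of V × W. Writing x¹ for the V-component of x ∈ V × W, one has Σ_{j=1}^{n} Σ_{k=1}^{d} ( ⟨e_j¹, η_k¹⟩² − ⟨e_j¹, J(η_k¹)⟩² ) = Σ_{k=1}^{d} Σ_{l=1}^{d} ( ⟨J(η_k¹), η_l¹⟩² − ⟨η_k¹, η_l¹⟩² ). (This is the normal-vector identity (MAIN) in the paper's Lemma 3.1, the algebraic core of the general second-variation formula in ℂP^{m/2} × M.) -/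
/-!
Parseval's identity for `(v, 0)`, split over the two blocks of the basis, expresses
`∑ⱼ ⟪eⱼ¹, v⟫²` as `‖v‖² - ∑ₗ ⟪v, ηₗ¹⟫²`. Taking `v = ηₖ¹` and `v = J ηₖ¹`, the two sides of the
identity differ by `∑ₖ (‖ηₖ¹‖² - ‖J ηₖ¹‖²)`, which vanishes because `J` is an isometry.
-/

open scoped RealInnerProductSpace

namespace OrthonormalBasis

variable {ι κ V W : Type*} [Fintype ι] [Fintype κ]
  [NormedAddCommGroup V] [InnerProductSpace ℝ V] [NormedAddCommGroup W] [InnerProductSpace ℝ W]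

theorem sum_sq_inner_fst_right (b : OrthonormalBasis ι ℝ (WithLp 2 (V × W))) (v : V) :
    ∑ i, ⟪(b i).fst, v⟫ ^ 2 = ‖v‖ ^ 2 := by
  simpa using b.sum_sq_inner_right (WithLp.toLp 2 (v, 0))

theorem sum_sq_inner_fst_inl (b : OrthonormalBasis (ι ⊕ κ) ℝ (WithLp 2 (V × W))) (v : V) :
    ∑ j, ⟪(b (Sum.inl j)).fst, v⟫ ^ 2 = ‖v‖ ^ 2 - ∑ l, ⟪v, (b (Sum.inr l)).fst⟫ ^ 2 := by
  rw [← b.sum_sq_inner_fst_right v, Fintype.sum_sum_type]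
  simp only [real_inner_comm v]
  ring

end OrthonormalBasis

theorem stmt_0_general {V W : Type*} [NormedAddCommGroup V] [InnerProductSpace ℝ V]
    [NormedAddCommGroup W] [InnerProductSpace ℝ W]
    (J : V →ₗ[ℝ] V)
    (hJiso : ∀ x y : V, ⟪J x, J y⟫ = ⟪x, y⟫)
    {n d : ℕ} (b : OrthonormalBasis (Fin n ⊕ Fin d) ℝ (WithLp 2 (V × W))) :
    ∑ j : Fin n, ∑ k : Fin d,
      (⟪(b (Sum.inl j)).fst, (b (Sum.inr k)).fst⟫ ^ 2
        - ⟪(b (Sum.inl j)).fst, J ((b (Sum.inr k)).fst)⟫ ^ 2)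
      = ∑ k : Fin d, ∑ l : Fin d,
        (⟪J ((b (Sum.inr k)).fst), (b (Sum.inr l)).fst⟫ ^ 2
          - ⟪(b (Sum.inr k)).fst, (b (Sum.inr l)).fst⟫ ^ 2) := by
  have hJnorm (x : V) : ‖J x‖ ^ 2 = ‖x‖ ^ 2 := by
    rw [← real_inner_self_eq_norm_sq, ← real_inner_self_eq_norm_sq, hJiso]
  rw [Finset.sum_comm]
  refine Finset.sum_congr rfl fun k _ => ?_
  rw [Finset.sum_sub_distrib, b.sum_sq_inner_fst_inl, b.sum_sq_inner_fst_inl, hJnorm,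
    Finset.sum_sub_distrib]
  ring

/-- Normal-vector identity (MAIN) in the paper's Lemma 3.1. -/
theorem stmt_0 {V W : Type*} [NormedAddCommGroup V] [InnerProductSpace ℝ V]
    [FiniteDimensional ℝ V] [NormedAddCommGroup W] [InnerProductSpace ℝ W]
    [FiniteDimensional ℝ W] (J : V →ₗ[ℝ] V)
    (hJiso : ∀ x y : V, ⟪J x, J y⟫ = ⟪x, y⟫)
    (hJsq : ∀ x : V, J (J x) = -x)
    {n d : ℕ} (b : OrthonormalBasis (Fin n ⊕ Fin d) ℝ (WithLp 2 (V × W))) :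
    ∑ j : Fin n, ∑ k : Fin d,
      (⟪(b (Sum.inl j)).fst, (b (Sum.inr k)).fst⟫ ^ 2
        - ⟪(b (Sum.inl j)).fst, J ((b (Sum.inr k)).fst)⟫ ^ 2)
      = ∑ k : Fin d, ∑ l : Fin d,
        (⟪J ((b (Sum.inr k)).fst), (b (Sum.inr l)).fst⟫ ^ 2
          - ⟪(b (Sum.inr k)).fst, (b (Sum.inr l)).fst⟫ ^ 2) :=
  stmt_0_general J hJiso b
end

section
/- Let V and W be finite-dimensional real inner product spaces, let J be a compatible complex structure on V, and let (e_1, …, e_n, η_1, …, η_d) be an orthonormal basis of V × W. Writing x¹ for the V-component of x ∈ V × W, one has Σ_{j=1}^{n} Σ_{k=1}^{d} ( ⟨e_j¹, η_k¹⟩² − ⟨e_j¹, J(η_k¹)⟩² ) = Σ_{i=1}^{n} Σ_{j=1}^{n} ( ⟨J(e_j¹), e_i¹⟩² − ⟨e_j¹, e_i¹⟩² ). (This is the tangent-vector identity (MAIN2) in the paper's Lemma 3.1.) -/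
/-!
Parseval's identity for the `V`-components of an orthonormal basis `b` of `V × W` reads
`∑ a, ⟪u, (b a)¹⟫² = ‖u‖²` for every `u : V`. Applying it to `u` and to `J u`, which has the same
norm, and using `⟪u, J η⟫ = -⟪J u, η⟫`, the identity already holds term by term in `j`, with
`u = e_j¹`; the double sums then agree after swapping the order of summation on the right.
-/

open scoped RealInnerProductSpace

theorem inner_apply_right_eq_neg_of_isometry_of_sq_eq_neg {V : Type*} [NormedAddCommGroup V]
    [InnerProductSpace ℝ V] {J : V →ₗ[ℝ] V}
    (hJiso : ∀ x y : V, ⟪J x, J y⟫ = ⟪x, y⟫) (hJsq : ∀ x : V, J (J x) = -x) (x y : V) :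
    ⟪x, J y⟫ = -⟪J x, y⟫ := by
  rw [← hJiso x (J y), hJsq, inner_neg_right]

section

variable {ι κ V W : Type*} [NormedAddCommGroup V] [InnerProductSpace ℝ V]
  [NormedAddCommGroup W] [InnerProductSpace ℝ W]

theorem OrthonormalBasis.sum_sq_inner_fst [Fintype ι]
    (b : OrthonormalBasis ι ℝ (WithLp 2 (V × W))) (u : V) :
    ∑ i, ⟪u, (b i).fst⟫ ^ 2 = ‖u‖ ^ 2 := by
  simpa [WithLp.prod_norm_sq_eq_of_L2] using b.sum_sq_inner_left (WithLp.toLp 2 (u, 0))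

theorem sum_sq_inner_fst_sub_sq_inner_apply_fst [Fintype ι] [Fintype κ] {J : V →ₗ[ℝ] V}
    (hJiso : ∀ x y : V, ⟪J x, J y⟫ = ⟪x, y⟫) (hJsq : ∀ x : V, J (J x) = -x)
    (b : OrthonormalBasis (ι ⊕ κ) ℝ (WithLp 2 (V × W))) (u : V) :
    ∑ k, (⟪u, (b (Sum.inr k)).fst⟫ ^ 2 - ⟪u, J (b (Sum.inr k)).fst⟫ ^ 2)
      = ∑ i, (⟪J u, (b (Sum.inl i)).fst⟫ ^ 2 - ⟪u, (b (Sum.inl i)).fst⟫ ^ 2) := by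
  have hu := b.sum_sq_inner_fst u
  have hJu := b.sum_sq_inner_fst (J u)
  have hnorm : ‖J u‖ = ‖u‖ := (J.isometryOfInner hJiso).norm_map u
  rw [hnorm] at hJu
  rw [Fintype.sum_sum_type] at hu hJu
  simp only [inner_apply_right_eq_neg_of_isometry_of_sq_eq_neg hJiso hJsq u, neg_sq,
    Finset.sum_sub_distrib]
  linarith

end

theorem stmt_1_general {V W : Type*} [NormedAddCommGroup V] [InnerProductSpace ℝ V]
    [NormedAddCommGroup W] [InnerProductSpace ℝ W]
    (J : V →ₗ[ℝ] V)
    (hJiso : ∀ x y : V, ⟪J x, J y⟫ = ⟪x, y⟫)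
    (hJsq : ∀ x : V, J (J x) = -x)
    {n d : ℕ} (b : OrthonormalBasis (Fin n ⊕ Fin d) ℝ (WithLp 2 (V × W))) :
    ∑ j : Fin n, ∑ k : Fin d,
      (⟪(b (Sum.inl j)).fst, (b (Sum.inr k)).fst⟫ ^ 2
        - ⟪(b (Sum.inl j)).fst, J ((b (Sum.inr k)).fst)⟫ ^ 2)
      = ∑ i : Fin n, ∑ j : Fin n,
        (⟪J ((b (Sum.inl j)).fst), (b (Sum.inl i)).fst⟫ ^ 2
          - ⟪(b (Sum.inl j)).fst, (b (Sum.inl i)).fst⟫ ^ 2) := by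
  refine (Finset.sum_congr rfl fun j _ ↦ ?_).trans Finset.sum_comm
  exact sum_sq_inner_fst_sub_sq_inner_apply_fst hJiso hJsq b _

/-- Tangent-vector identity (MAIN2) in the paper's Lemma 3.1. -/
theorem stmt_1 {V W : Type*} [NormedAddCommGroup V] [InnerProductSpace ℝ V]
    [FiniteDimensional ℝ V] [NormedAddCommGroup W] [InnerProductSpace ℝ W]
    [FiniteDimensional ℝ W] (J : V →ₗ[ℝ] V)
    (hJiso : ∀ x y : V, ⟪J x, J y⟫ = ⟪x, y⟫)
    (hJsq : ∀ x : V, J (J x) = -x)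
    {n d : ℕ} (b : OrthonormalBasis (Fin n ⊕ Fin d) ℝ (WithLp 2 (V × W))) :
    ∑ j : Fin n, ∑ k : Fin d,
      (⟪(b (Sum.inl j)).fst, (b (Sum.inr k)).fst⟫ ^ 2
        - ⟪(b (Sum.inl j)).fst, J ((b (Sum.inr k)).fst)⟫ ^ 2)
      = ∑ i : Fin n, ∑ j : Fin n,
        (⟪J ((b (Sum.inl j)).fst), (b (Sum.inl i)).fst⟫ ^ 2
          - ⟪(b (Sum.inl j)).fst, (b (Sum.inl i)).fst⟫ ^ 2) :=
  stmt_1_general J hJiso hJsq b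
end

section
/- Let V and W be finite-dimensional real inner product spaces, let J be a compatible complex structure on V, and let (e, η_1, …, η_d) be an orthonormal basis of V × W (so the 'tangent' part consists of the single unit vector e). Writing x¹ for the V-component of x ∈ V × W, one has Σ_{k=1}^{d} ( ⟨e¹, η_k¹⟩² − ⟨e¹, J(η_k¹)⟩² ) = −‖e¹‖⁴. (This is the dimension-one formula used to prove the paper's Theorem 3.9 on stable geodesics in ℂP^{m/2} × M.) -/
open scoped RealInnerProductSpace

/-- Dimension-one formula used in the paper's Theorem 3.9. -/
theorem stmt_3 {V W : Type*} [NormedAddCommGroup V] [InnerProductSpace ℝ V]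
    [FiniteDimensional ℝ V] [NormedAddCommGroup W] [InnerProductSpace ℝ W]
    [FiniteDimensional ℝ W] (J : V →ₗ[ℝ] V)
    (hJiso : ∀ x y : V, ⟪J x, J y⟫ = ⟪x, y⟫)
    (hJsq : ∀ x : V, J (J x) = -x)
    {d : ℕ} (b : OrthonormalBasis (Fin 1 ⊕ Fin d) ℝ (WithLp 2 (V × W))) :
    ∑ k : Fin d,
      (⟪(b (Sum.inl 0)).fst, (b (Sum.inr k)).fst⟫ ^ 2
        - ⟪(b (Sum.inl 0)).fst, J ((b (Sum.inr k)).fst)⟫ ^ 2)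
      = -‖(b (Sum.inl 0)).fst‖ ^ 4 := by
  set e : V := (b (Sum.inl 0)).fst with he
  -- J is skew-adjoint
  have hskew : ∀ x y : V, ⟪J x, y⟫ = -⟪x, J y⟫ := by
    intro x y
    have := hJiso x (J y)
    rw [hJsq] at this
    rw [inner_neg_right] at this
    linarith [this]
  -- Parseval for (u, 0)
  have key : ∀ u : V, ∑ i : Fin 1 ⊕ Fin d, ⟪u, (b i).fst⟫ * ⟪(b i).fst, u⟫ = ⟪u, u⟫ := by
    intro u
    have := b.sum_inner_mul_inner ((WithLp.equiv 2 (V × W)).symm (u, 0))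
      ((WithLp.equiv 2 (V × W)).symm (u, 0))
    simpa [WithLp.prod_inner_apply] using this
  have h1 := key e
  have h2 := key (J e)
  rw [Fintype.sum_sum_type] at h1 h2
  simp only [Finset.univ_unique, Finset.sum_singleton, Fin.default_eq_zero] at h1 h2
  have hJe : ⟪J e, e⟫ = 0 := by
    have h := hskew e e
    have h2' : ⟪e, J e⟫ = ⟪J e, e⟫ := real_inner_comm _ _
    linarith
  have hJiso' : ⟪J e, J e⟫ = ⟪e, e⟫ := hJiso e e
  have hnorm : ⟪e, e⟫ = ‖e‖ ^ 2 := real_inner_self_eq_norm_sq e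
  have hflip : ∀ k : Fin d, ⟪J e, (b (Sum.inr k)).fst⟫ = -⟪e, J ((b (Sum.inr k)).fst)⟫ := by
    intro k; exact hskew e _
  have e1 : ∑ k : Fin d, ⟪e, (b (Sum.inr k)).fst⟫ ^ 2 = ‖e‖ ^ 2 - ‖e‖ ^ 4 := by
    have : ∀ k : Fin d, ⟪e, (b (Sum.inr k)).fst⟫ * ⟪(b (Sum.inr k)).fst, e⟫
        = ⟪e, (b (Sum.inr k)).fst⟫ ^ 2 := by
      intro k; rw [real_inner_comm ((b (Sum.inr k)).fst) e]; ring
    rw [Finset.sum_congr rfl (fun k _ => this k)] at h1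
    nlinarith [h1, hnorm]
  have e2 : ∑ k : Fin d, ⟪e, J ((b (Sum.inr k)).fst)⟫ ^ 2 = ‖e‖ ^ 2 := by
    have : ∀ k : Fin d, ⟪J e, (b (Sum.inr k)).fst⟫ * ⟪(b (Sum.inr k)).fst, J e⟫
        = ⟪e, J ((b (Sum.inr k)).fst)⟫ ^ 2 := by
      intro k
      have hc : ⟪(b (Sum.inr k)).fst, J e⟫ = -⟪e, J ((b (Sum.inr k)).fst)⟫ := by
        rw [real_inner_comm]; exact hflip k
      rw [hflip k, hc]; ring
    rw [Finset.sum_congr rfl (fun k _ => this k)] at h2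
    have hJe' : ⟪e, J e⟫ = 0 := by
      rw [real_inner_comm]; exact hJe
    nlinarith [h2, hnorm, hJiso', hJe']
  rw [Finset.sum_sub_distrib, e1, e2]
  ring
end

section
/- Let V be a real inner product space with a compatible complex structure J, and let a, b ∈ V. Then 2⟨J(a), b⟩² = ‖a‖⁴ + ‖b‖⁴ + 2⟨a, b⟩² holds if and only if b = J(a) or b = −J(a). (This equality analysis is the conclusion of the paper's Lemma 3.4: for a compact stable minimal immersion of codimension two in ℂP^{m₁/2} × M with orthonormal normal basis {η₁, η₂}, it forces η₂¹ = ±J(η₁¹).) -/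
open scoped RealInnerProductSpace

/-- Equality analysis concluding the paper's Lemma 3.4. -/
theorem stmt_6 {V : Type*} [NormedAddCommGroup V] [InnerProductSpace ℝ V]
    (J : V →ₗ[ℝ] V)
    (hJiso : ∀ x y : V, ⟪J x, J y⟫ = ⟪x, y⟫)
    (hJsq : ∀ x : V, J (J x) = -x)
    (a b : V) :
    2 * ⟪J a, b⟫ ^ 2 = ‖a‖ ^ 4 + ‖b‖ ^ 4 + 2 * ⟪a, b⟫ ^ 2 ↔ b = J a ∨ b = -(J a) := by
  have hAJ : ⟪J a, J a⟫ = ⟪a, a⟫ := hJiso a a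
  have hOrth : ⟪a, J a⟫ = 0 := by
    have h1 : ⟪J (J a), J a⟫ = ⟪J a, a⟫ := hJiso (J a) a
    rw [hJsq, inner_neg_left] at h1
    have h2 := real_inner_comm a (J a)
    linarith
  have hA : ⟪a, a⟫ = ‖a‖ ^ 2 := real_inner_self_eq_norm_sq a
  have hB : ⟪b, b⟫ = ‖b‖ ^ 2 := real_inner_self_eq_norm_sq b
  have hA4 : ‖a‖ ^ 4 = ⟪a, a⟫ ^ 2 := by rw [hA]; ring
  have hB4 : ‖b‖ ^ 4 = ⟪b, b⟫ ^ 2 := by rw [hB]; ring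
  have hc : ⟪b, J a⟫ = ⟪J a, b⟫ := real_inner_comm _ _
  constructor
  · intro h
    rw [hA4, hB4] at h
    have hsub : ⟪b - J a, b - J a⟫ = ⟪b, b⟫ - 2 * ⟪b, J a⟫ + ⟪J a, J a⟫ :=
      real_inner_sub_sub_self b (J a)
    have hadd : ⟪b + J a, b + J a⟫ = ⟪b, b⟫ + 2 * ⟪b, J a⟫ + ⟪J a, J a⟫ :=
      real_inner_add_add_self b (J a)
    have h1 : (0:ℝ) ≤ ⟪b - J a, b - J a⟫ := real_inner_self_nonneg
    have h2 : (0:ℝ) ≤ ⟪b + J a, b + J a⟫ := real_inner_self_nonneg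
    have hle : ⟪b - J a, b - J a⟫ * ⟪b + J a, b + J a⟫ ≤ 0 := by
      nlinarith [sq_nonneg (⟪a, a⟫ - ⟪b, b⟫), sq_nonneg (⟪a, b⟫ : ℝ)]
    have hprod : ⟪b - J a, b - J a⟫ * ⟪b + J a, b + J a⟫ = 0 :=
      le_antisymm hle (mul_nonneg h1 h2)
    rcases mul_eq_zero.mp hprod with h0 | h0
    · left
      have : b - J a = 0 := inner_self_eq_zero.mp h0
      exact sub_eq_zero.mp this
    · right
      have : b + J a = 0 := inner_self_eq_zero.mp h0
      exact eq_neg_of_add_eq_zero_left this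
  · rintro (rfl | rfl)
    · rw [hA4, hAJ]
      nlinarith [hOrth, real_inner_comm a (J a)]
    · have hJA4 : ‖J a‖ ^ 4 = ⟪J a, J a⟫ ^ 2 := by
        rw [real_inner_self_eq_norm_sq]; ring
      rw [hA4]
      simp only [inner_neg_right, inner_neg_left, norm_neg]
      rw [hJA4, hAJ]
      nlinarith [hOrth, real_inner_comm a (J a)]
end

section
/- Let V be a real inner product space with a compatible quaternionic structure (J₁, J₂, J₃), and let a, b ∈ V. If b = J₁(a) or b = −J₁(a), and also b = J₂(a) or b = −J₂(a), then a = 0 and b = 0. (This is the rigidity argument in the proofs of the paper's Theorems 4.2 and 4.9: simultaneous compatibility with two anticommuting complex structures forces the projections to vanish.) -/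
open scoped RealInnerProductSpace

/-- Quaternionic rigidity in the proofs of the paper's Theorems 4.2 and 4.9. -/
theorem stmt_8 {V : Type*} [NormedAddCommGroup V] [InnerProductSpace ℝ V]
    (J₁ J₂ J₃ : V →ₗ[ℝ] V)
    (hiso₁ : ∀ x y : V, ⟪J₁ x, J₁ y⟫ = ⟪x, y⟫)
    (hiso₂ : ∀ x y : V, ⟪J₂ x, J₂ y⟫ = ⟪x, y⟫)
    (hiso₃ : ∀ x y : V, ⟪J₃ x, J₃ y⟫ = ⟪x, y⟫)
    (hsq₁ : ∀ x : V, J₁ (J₁ x) = -x)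
    (hsq₂ : ∀ x : V, J₂ (J₂ x) = -x)
    (hsq₃ : ∀ x : V, J₃ (J₃ x) = -x)
    (hcomp : ∀ x : V, J₁ (J₂ x) = J₃ x)
    (a b : V)
    (h₁ : b = J₁ a ∨ b = -(J₁ a))
    (h₂ : b = J₂ a ∨ b = -(J₂ a)) :
    a = 0 ∧ b = 0 := by
  have hskew : ⟪J₃ a, a⟫ = 0 := by
    have h : ⟪J₃ a, a⟫ = -⟪J₃ a, a⟫ := by
      calc ⟪J₃ a, a⟫ = ⟪J₃ (J₃ a), J₃ a⟫ := (hiso₃ _ _).symm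
        _ = ⟪-a, J₃ a⟫ := by rw [hsq₃]
        _ = -⟪J₃ a, a⟫ := by rw [inner_neg_left, real_inner_comm]
    linarith
  have horth : ⟪J₁ a, J₂ a⟫ = 0 := by
    calc ⟪J₁ a, J₂ a⟫ = ⟪J₁ (J₁ a), J₁ (J₂ a)⟫ := (hiso₁ _ _).symm
      _ = ⟪-a, J₃ a⟫ := by rw [hsq₁, hcomp]
      _ = -⟪J₃ a, a⟫ := by rw [inner_neg_left, real_inner_comm]
      _ = 0 := by rw [hskew]; ring
  have hb0 : b = 0 := by
    have hbb : ⟪b, b⟫ = 0 := by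
      rcases h₁ with rfl | rfl <;> rcases h₂ with h₂ | h₂
      · rw (occs := .pos [2]) [h₂]; exact horth
      · rw (occs := .pos [2]) [h₂]; simp [inner_neg_right, horth]
      · rw (occs := .pos [2]) [h₂]; simp [inner_neg_left, horth]
      · rw (occs := .pos [2]) [neg_injective h₂]
        simp [inner_neg_neg, horth]
    exact inner_self_eq_zero.mp hbb
  have hJ₁a : J₁ a = 0 := by
    rcases h₁ with h₁ | h₁
    · rw [← h₁, hb0]
    · have := h₁; rw [hb0] at this
      exact neg_eq_zero.mp this.symm
  have ha : a = 0 := by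
    have := hsq₁ a
    rw [hJ₁a, map_zero] at this
    simpa using this.symm
  exact ⟨ha, hb0⟩
end

section
/- Let V be a real inner product space with a compatible quaternionic structure (J₁, J₂, J₃), and let a, b ∈ V. If for every s ∈ {1, 2, 3} one has 2⟨J_s(a), b⟩² = ‖a‖⁴ + ‖b‖⁴ + 2⟨a, b⟩², then a = 0 and b = 0. (This combines the equality case of the key inequality with quaternionic rigidity; it is the algebraic core of the paper's Theorem 4.2 on codimension-two stable minimal immersions in ℍP^{m₁/4} × M.) -/
open scoped RealInnerProductSpace

/-- Auxiliary arithmetic: equality in the key inequality plus Cauchy–Schwarz forces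
`p = 0`, `A = B` and `x ^ 2 = A * B`. -/
lemma stmt_9_aux (x A B p : ℝ) (h : 2 * x ^ 2 = A ^ 2 + B ^ 2 + 2 * p ^ 2)
    (hcs : x * x ≤ A * B) : p = 0 ∧ A = B ∧ x ^ 2 = A * B := by
  have h1 : (A - B) ^ 2 + 2 * p ^ 2 ≤ 0 := by nlinarith
  have hp2 : p ^ 2 = 0 := le_antisymm (by nlinarith [sq_nonneg (A - B)]) (sq_nonneg p)
  have hd2 : (A - B) ^ 2 = 0 := le_antisymm (by nlinarith [sq_nonneg p]) (sq_nonneg _)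
  have hp : p = 0 := by
    have := pow_eq_zero_iff (n := 2) (by norm_num) |>.1 hp2
    exact this
  have hab : A = B := by
    have := pow_eq_zero_iff (n := 2) (by norm_num) |>.1 hd2
    linarith [sub_eq_zero.1 this]
  refine ⟨hp, hab, ?_⟩
  nlinarith


/-- Algebraic core of the paper's Theorem 4.2: equality of the key inequality for all three
complex structures of a quaternionic structure forces both vectors to vanish. -/
theorem stmt_9 {V : Type*} [NormedAddCommGroup V] [InnerProductSpace ℝ V]
    (J₁ J₂ J₃ : V →ₗ[ℝ] V)
    (hiso₁ : ∀ x y : V, ⟪J₁ x, J₁ y⟫ = ⟪x, y⟫)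
    (hiso₂ : ∀ x y : V, ⟪J₂ x, J₂ y⟫ = ⟪x, y⟫)
    (hiso₃ : ∀ x y : V, ⟪J₃ x, J₃ y⟫ = ⟪x, y⟫)
    (hsq₁ : ∀ x : V, J₁ (J₁ x) = -x)
    (hsq₂ : ∀ x : V, J₂ (J₂ x) = -x)
    (hsq₃ : ∀ x : V, J₃ (J₃ x) = -x)
    (hcomp : ∀ x : V, J₁ (J₂ x) = J₃ x)
    (a b : V)
    (h₁ : 2 * ⟪J₁ a, b⟫ ^ 2 = ‖a‖ ^ 4 + ‖b‖ ^ 4 + 2 * ⟪a, b⟫ ^ 2)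
    (h₂ : 2 * ⟪J₂ a, b⟫ ^ 2 = ‖a‖ ^ 4 + ‖b‖ ^ 4 + 2 * ⟪a, b⟫ ^ 2)
    (h₃ : 2 * ⟪J₃ a, b⟫ ^ 2 = ‖a‖ ^ 4 + ‖b‖ ^ 4 + 2 * ⟪a, b⟫ ^ 2) :
    a = 0 ∧ b = 0 := by
  -- skewness of J₁
  have skew₁ : ∀ x : V, ⟪J₁ x, x⟫ = 0 := by
    intro x
    have h := hiso₁ x (J₁ x)
    rw [hsq₁ x, inner_neg_right] at h
    have hc := real_inner_comm x (J₁ x)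
    linarith
  have hA4 : ‖a‖ ^ 4 = ⟪a, a⟫ ^ 2 := by rw [real_inner_self_eq_norm_sq]; ring
  have hB4 : ‖b‖ ^ 4 = ⟪b, b⟫ ^ 2 := by rw [real_inner_self_eq_norm_sq]; ring
  rw [hA4, hB4] at h₂ h₃
  have cs₂ : ⟪J₂ a, b⟫ * ⟪J₂ a, b⟫ ≤ ⟪a, a⟫ * ⟪b, b⟫ := by
    have := real_inner_mul_inner_self_le (J₂ a) b
    rwa [hiso₂ a a] at this
  have cs₃ : ⟪J₃ a, b⟫ * ⟪J₃ a, b⟫ ≤ ⟪a, a⟫ * ⟪b, b⟫ := by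
    have := real_inner_mul_inner_self_le (J₃ a) b
    rwa [hiso₃ a a] at this
  obtain ⟨-, hAeqB, he₂⟩ := stmt_9_aux _ _ _ _ h₂ cs₂
  obtain ⟨-, -, he₃⟩ := stmt_9_aux _ _ _ _ h₃ cs₃
  by_cases ha : a = 0
  · subst ha
    have hBz : ⟪b, b⟫ = (0 : ℝ) := by
      rw [← hAeqB]; simp
    exact ⟨rfl, inner_self_eq_zero.1 hBz⟩
  · exfalso
    have hApos : (0 : ℝ) < ⟪a, a⟫ := by
      rw [real_inner_self_eq_norm_sq]
      exact pow_pos (norm_pos_iff.2 ha) 2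
    have hc2 : ⟪J₂ a, b⟫ ^ 2 = ⟪a, a⟫ ^ 2 := by rw [he₂, ← hAeqB]; ring
    have hfac : (⟪J₂ a, b⟫ - ⟪a, a⟫) * (⟪J₂ a, b⟫ + ⟪a, a⟫) = 0 := by
      linear_combination hc2
    have hJ3z : ⟪J₃ a, b⟫ = 0 := by
      rcases mul_eq_zero.1 hfac with hc | hc
      · have hnz : ⟪J₂ a - b, J₂ a - b⟫ = 0 := by
          rw [real_inner_sub_sub_self, hiso₂ a a]
          linarith [sub_eq_zero.1 hc]
        have heq : J₂ a = b := sub_eq_zero.1 (inner_self_eq_zero.1 hnz)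
        rw [← heq, ← hcomp a]
        exact skew₁ (J₂ a)
      · have hnz : ⟪J₂ a + b, J₂ a + b⟫ = 0 := by
          rw [real_inner_add_add_self, hiso₂ a a]
          linarith [eq_neg_of_add_eq_zero_left hc]
        have heq : J₂ a = -b := eq_neg_of_add_eq_zero_left (inner_self_eq_zero.1 hnz)
        have hJ : J₃ a = -(J₁ b) := by rw [← hcomp a, heq, map_neg]
        rw [hJ, inner_neg_left, skew₁ b, neg_zero]
    have hprod : (0 : ℝ) < ⟪a, a⟫ * ⟪b, b⟫ := mul_pos hApos (hAeqB ▸ hApos)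
    rw [hJ3z] at he₃
    norm_num at he₃
    rcases he₃ with h | h
    · exact ha h
    · rw [h] at hprod
      simp at hprod
end
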